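/- For block sizes (2,1,3,2), the polynomial L_{(4,8)} = x_{3,4}·det[[x_{4,7},x_{4,8}],[x_{6,7},x_{6,8}]] + x_{3,5}·det[[x_{5,7},x_{5,8}],[x_{6,7},x_{6,8}]] is invariant under conjugation of the generic nilradical 8×8 matrix by every upper unitriangular matrix. Note the unusual middle structure: the first minor skips row 5 (its rows are {4,6}), yet invariance still holds. -/

import Mathlib

/-! In 1-based indices, expanding `(X²)_{3,j} = x_{3,4}x_{4,j} + x_{3,5}x_{5,j} + x_{3,6}x_{6,j}` shows
`L_{(4,8)} = x_{6,8}(X²)_{3,7} - x_{6,7}(X²)_{3,8}`: the `x_{3,6}` terms cancel, so `L_{(4,8)}` is the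
minor in columns `{7,8}` of the two rows `(X²)_3` and `X_6`. All rows of `X²` below row 3 and of `X`
below row 6 vanish, so for upper unitriangular `g` these two rows of `(gXg⁻¹)²` and `gXg⁻¹` are the
rows of `X²` and `X` times `g⁻¹`. Both are supported on columns `{7,8}`, so the minor gets
multiplied by the determinant of the unitriangular `{7,8}`-corner of `g⁻¹`, which is `1`. -/

open Matrix

/-- Block map for the block sizes `(2,1,3,2)` of `gl(8)`:
blocks `{1,2}, {3}, {4,5,6}, {7,8}`. -/
def blk8 (i : Fin 8) : ℕ :=
  if (i : ℕ) < 2 then 0 else if (i : ℕ) < 3 then 1 else if (i : ℕ) < 6 then 2 else 3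

/-- `L_{(4,8)} = x_{3,4}·det[[x_{4,7},x_{4,8}],[x_{6,7},x_{6,8}]]
+ x_{3,5}·det[[x_{5,7},x_{5,8}],[x_{6,7},x_{6,8}]]` (the first minor skips row 5). -/
def L48 {K : Type*} [Field K] (X : Matrix (Fin 8) (Fin 8) K) : K :=
  X 2 3 * (X 3 6 * X 5 7 - X 3 7 * X 5 6) + X 2 4 * (X 4 6 * X 5 7 - X 4 7 * X 5 6)

namespace Matrix

variable {R l m n o p q : Type*} [CommRing R]

theorem submatrix_mul_of_apply_eq_zero [Fintype m] [Fintype p] {A : Matrix l m R}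
    {B : Matrix m n R} (r : o → l) {e : p → m} (he : Function.Injective e) (c : q → n)
    (hA : ∀ i j, j ∉ Set.range e → A (r i) j = 0) :
    (A * B).submatrix r c = A.submatrix r e * B.submatrix e c := by
  ext i j
  simp only [submatrix_apply, mul_apply]
  exact (Fintype.sum_of_injective e he _ _ (fun j hj => by simp [hA i j hj]) fun _ => rfl).symm

theorem IsUpperTriangular.mul_row_eq [Fintype n] [LinearOrder n] {g M : Matrix n n R}
    (hg : g.IsUpperTriangular) {i : n} (hgi : g i i = 1) (hM : ∀ k, i < k → M k = 0) :
    (g * M) i = M i := by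
  ext j
  rw [mul_apply, Finset.sum_eq_single i (fun k _ hki => ?_) (by simp), hgi, one_mul]
  rcases hki.lt_or_gt with hki | hik
  · rw [hg hki, zero_mul]
  · rw [hM k hik, Pi.zero_apply, mul_zero]

theorem mul_self_apply_eq_zero_of_not_lt [Fintype n] (f : n → ℕ) {X : Matrix n n R}
    (hX : ∀ a b, ¬ f a < f b → X a b = 0) (a b : n) (hab : ¬ f a + 1 < f b) :
    (X * X) a b = 0 := by
  rw [mul_apply]
  refine Finset.sum_eq_zero fun k _ => ?_
  by_cases hak : f a < f k
  · rw [hX k b (by omega), mul_zero]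
  · rw [hX a k hak, zero_mul]

theorem IsUpperTriangular.mul_apply_eq_zero_of_not_lt [Fintype n] [LinearOrder n] {α : Type*}
    [Preorder α] {f : n → α} (hf : Monotone f) {g X : Matrix n n R} (hg : g.IsUpperTriangular)
    (hX : ∀ a b, ¬ f a < f b → X a b = 0) (a b : n) (hab : ¬ f a < f b) : (g * X) a b = 0 := by
  rw [mul_apply]
  refine Finset.sum_eq_zero fun k _ => ?_
  rcases lt_or_ge k a with hka | hak
  · rw [hg hka, zero_mul]
  · rw [hX k b fun hkb => hab ((hf hak).trans_lt hkb), mul_zero]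

theorem IsUpperTriangular.apply_mul_eq_zero_of_not_lt [Fintype n] [LinearOrder n] {α : Type*}
    [Preorder α] {f : n → α} (hf : Monotone f) {X h : Matrix n n R} (hh : h.IsUpperTriangular)
    (hX : ∀ a b, ¬ f a < f b → X a b = 0) (a b : n) (hab : ¬ f a < f b) : (X * h) a b = 0 := by
  rw [mul_apply]
  refine Finset.sum_eq_zero fun k _ => ?_
  rcases lt_or_ge b k with hbk | hkb
  · rw [hh hbk, mul_zero]
  · rw [hX a k fun hak => hab (hak.trans_le (hf hkb)), zero_mul]

end Matrix

section L48

variable {R : Type*} [CommRing R]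

theorem det_inv_submatrix_six_seven {g : Matrix (Fin 8) (Fin 8) R}
    [Invertible g] (hg : g.IsUpperTriangular) (hg1 : ∀ a, g a a = 1) :
    (g⁻¹.submatrix ![6, 7] ![6, 7]).det = 1 := by
  -- `{6, 7}` is a final segment, so the corner of `g⁻¹` is the inverse of the corner of `g`.
  have hprod : g.submatrix ![6, 7] ![6, 7] * g⁻¹.submatrix ![6, 7] ![6, 7] = 1 := by
    rw [← submatrix_mul_of_apply_eq_zero _ (by decide) _ fun i j hj => ?_,
      mul_inv_of_invertible, submatrix_one _ (by decide)]
    simp only [Set.mem_range, not_exists] at hj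
    exact hg (by revert i j; decide)
  have hdet : (g.submatrix ![6, 7] ![6, 7]).det = 1 := by
    rw [det_fin_two]
    simp [hg1, hg (show (6 : Fin 8) < 7 by decide)]
  have := congrArg det hprod
  rwa [det_mul, hdet, one_mul, det_one] at this

def l48Rows (X : Matrix (Fin 8) (Fin 8) R) : Matrix (Fin 2) (Fin 8) R :=
  Matrix.of ![(X * X) 2, X 5]

def l48Minor (X : Matrix (Fin 8) (Fin 8) R) : Matrix (Fin 2) (Fin 2) R :=
  (l48Rows X).submatrix id ![6, 7]

theorem L48_eq_det_l48Minor {K : Type*} [Field K] {X : Matrix (Fin 8) (Fin 8) K}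
    (hX : ∀ a b : Fin 8, ¬ blk8 a < blk8 b → X a b = 0) : L48 X = (l48Minor X).det := by
  have hsq : ∀ j, (X * X) 2 j = X 2 3 * X 3 j + X 2 4 * X 4 j + X 2 5 * X 5 j := fun j => by
    simp [mul_apply, Fin.sum_univ_eight, hX 2 0 (by decide), hX 2 1 (by decide),
      hX 2 2 (by decide), hX 6 j (by revert j; decide), hX 7 j (by revert j; decide)]
  simp [L48, l48Minor, l48Rows, det_fin_two, hsq]
  ring

variable {X : Matrix (Fin 8) (Fin 8) R} (hX : ∀ a b : Fin 8, ¬ blk8 a < blk8 b → X a b = 0)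
include hX

theorem l48Rows_conj {g : Matrix (Fin 8) (Fin 8) R} [Invertible g] (hg : g.IsUpperTriangular)
    (hg1 : ∀ a, g a a = 1) : l48Rows (g * X * g⁻¹) = l48Rows X * g⁻¹ := by
  have hconj_sq : g * X * g⁻¹ * (g * X * g⁻¹) = g * (X * X) * g⁻¹ := by
    simp only [Matrix.mul_assoc, inv_mul_cancel_left_of_invertible]
  have hXX_below : ∀ k : Fin 8, 2 < k → (X * X) k = 0 := fun k hk => funext fun b =>
    mul_self_apply_eq_zero_of_not_lt blk8 hX k b (by revert k b; decide)
  have hX_below : ∀ k : Fin 8, 5 < k → X k = 0 := fun k hk => funext fun b =>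
    hX k b (by revert k b; decide)
  ext i j
  fin_cases i
  · simp [l48Rows, hconj_sq, mul_apply_eq_vecMul (g * (X * X)), hg.mul_row_eq (hg1 2) hXX_below]
  · simp [l48Rows, mul_apply_eq_vecMul (g * X), hg.mul_row_eq (hg1 5) hX_below]

theorem l48Minor_conj {g : Matrix (Fin 8) (Fin 8) R} [Invertible g] (hg : g.IsUpperTriangular)
    (hg1 : ∀ a, g a a = 1) :
    l48Minor (g * X * g⁻¹) = l48Minor X * g⁻¹.submatrix ![6, 7] ![6, 7] := by
  rw [l48Minor, l48Rows_conj hX hg hg1]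
  refine submatrix_mul_of_apply_eq_zero _ (by decide) _ fun i j hj => ?_
  simp only [Set.mem_range, not_exists] at hj
  fin_cases i
  · exact mul_self_apply_eq_zero_of_not_lt blk8 hX 2 j (by revert j; decide)
  · exact hX 5 j (by revert j; decide)

end L48

theorem L48_N_invariant_general {K : Type*} [Field K]
    (X g : Matrix (Fin 8) (Fin 8) K)
    (hX : ∀ a b : Fin 8, ¬ blk8 a < blk8 b → X a b = 0)
    (hg : ∀ a b : Fin 8, b < a → g a b = 0) (hg1 : ∀ a : Fin 8, g a a = 1) :
    L48 (g * X * g⁻¹) = L48 X := by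
  have hg_upper : g.IsUpperTriangular := fun a b hab => hg a b hab
  have : Invertible g := invertibleOfIsUnitDet g (by simp [det_of_isUpperTriangular hg_upper, hg1])
  have hblk : Monotone blk8 := by intro a b; revert a b; decide
  have hinv_upper : g⁻¹.IsUpperTriangular := blockTriangular_inv_of_blockTriangular hg_upper
  have hconj : ∀ a b, ¬ blk8 a < blk8 b → (g * X * g⁻¹) a b = 0 :=
    hinv_upper.apply_mul_eq_zero_of_not_lt hblk
      (hg_upper.mul_apply_eq_zero_of_not_lt hblk hX)
  rw [L48_eq_det_l48Minor hconj, L48_eq_det_l48Minor hX, l48Minor_conj hX hg_upper hg1, det_mul,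
    det_inv_submatrix_six_seven hg_upper hg1, mul_one]

/-- For block sizes `(2,1,3,2)`, the polynomial `L_{(4,8)}` is invariant under
conjugation of the generic nilradical matrix by every upper unitriangular matrix. -/
theorem L48_N_invariant {K : Type*} [Field K] [CharZero K]
    (X g : Matrix (Fin 8) (Fin 8) K)
    (hX : ∀ a b : Fin 8, ¬ blk8 a < blk8 b → X a b = 0)
    (hg : ∀ a b : Fin 8, b < a → g a b = 0) (hg1 : ∀ a : Fin 8, g a a = 1) :
    L48 (g * X * g⁻¹) = L48 X :=
  L48_N_invariant_general X g hX hg hg1
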